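/- arXiv:2506.17813 — 2 statements merged into one kernel-verified Lean document; each statement's English description precedes it below -/
import Mathlib

section
/- Let $\alpha$ be a positive integer and define $p : \mathbb{R}^2 \to \mathbb{R}$ in polar coordinates by $p(r,\theta) = c_j \, r^{\alpha} |\sin(\alpha\theta)|$ for $\theta \in (\tfrac{j\pi}{\alpha}, \tfrac{(j+1)\pi}{\alpha})$, $j = 0, \dots, 2\alpha - 1$, where $c_j \in \mathbb{R}$ are constants alternating in sign (i.e., $c_j = (-1)^j |c_j|$ with all $|c_j|$ possibly distinct). If $p$ is continuously differentiable across each ray $\{\theta = j\pi/\alpha\}$, then all $|c_j|$ are equal, and $p$ equals (up to sign) a constant multiple of the harmonic polynomial $r^\alpha \sin(\alpha\theta)$; in particular $p$ is harmonic on $\mathbb{R}^2$. -/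
/-!
On the `j`-th sector the alternating signs of `c_j` cancel those of `sin(αθ)`, so
`p = |c_j| r^α sin(αθ)` there. Across the ray `θ = jπ/α` the function `sin(αθ)` vanishes with
nonzero slope `α cos(jπ) = ±α`, so equality of the one-sided derivatives of `p` forces
`|c_{j-1}| = |c_j|`. Finally `r^α sin(αθ) = Im((r e^{iθ})^α)`.
-/

open Real Set Filter Topology

/-- The angular profile `θ ↦ c_j |sin(αθ)|` of the piecewise function `p(r,θ) = c_j r^α |sin(αθ)|`
for `θ` in the `j`-th sector `(jπ/α, (j+1)π/α)`. -/
noncomputable def Pfun (α : ℕ) (c : ℤ → ℝ) (θ : ℝ) : ℝ :=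
  c ⌊θ * α / π⌋ * |Real.sin (α * θ)|

lemma abs_sin_eq_neg_one_zpow_floor_mul_sin (x : ℝ) :
    |sin x| = (-1) ^ ⌊x / π⌋ * sin x := by
  set j := ⌊x / π⌋
  have hlo : j * π ≤ x := (le_div_iff₀ pi_pos).1 (Int.floor_le _)
  have hhi : x < (j + 1) * π := (div_lt_iff₀ pi_pos).1 (Int.lt_floor_add_one _)
  have hnonneg : 0 ≤ (-1) ^ j * sin x := by
    rw [← sin_sub_int_mul_pi]
    exact sin_nonneg_of_nonneg_of_le_pi (by linarith) (by linarith)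
  calc |sin x| = |(-1) ^ j * sin x| := by rw [abs_mul, abs_neg_one_zpow, one_mul]
    _ = (-1) ^ j * sin x := abs_of_nonneg hnonneg

lemma floor_mul_div_eq_of_mem_Ico {a b : ℝ} (ha : 0 < a) (hb : 0 < b) {j : ℤ} {θ : ℝ}
    (hθ : θ ∈ Ico (j * (b / a)) ((j + 1) * (b / a))) : ⌊θ * a / b⌋ = j := by
  have hba : 0 < b / a := div_pos hb ha
  rw [← div_div_eq_mul_div, Int.floor_eq_iff]
  exact ⟨(le_div_iff₀ hba).2 hθ.1, (div_lt_iff₀ hba).2 hθ.2⟩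

lemma HasDerivAt.eq_of_eventuallyEq_nhdsGT_nhdsLT {F : Type*} [NormedAddCommGroup F]
    [NormedSpace ℝ F] {f g₁ g₂ : ℝ → F} {x : ℝ} {d₁ d₂ : F}
    (h₁ : HasDerivAt g₁ d₁ x) (h₂ : HasDerivAt g₂ d₂ x) (hf : DifferentiableAt ℝ f x)
    (hR : f =ᶠ[𝓝[>] x] g₁) (hL : f =ᶠ[𝓝[<] x] g₂) (hx₁ : f x = g₁ x) (hx₂ : f x = g₂ x) :
    d₁ = d₂ :=
  ((uniqueDiffWithinAt_Ioi x).eq_deriv _ (h₁.hasDerivWithinAt.congr_of_eventuallyEq hR hx₁)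
      hf.hasDerivAt.hasDerivWithinAt).trans
    ((uniqueDiffWithinAt_Iio x).eq_deriv _ hf.hasDerivAt.hasDerivWithinAt
      (h₂.hasDerivWithinAt.congr_of_eventuallyEq hL hx₂))

section Pfun

variable {α : ℕ} {c : ℤ → ℝ}

lemma Pfun_eq_abs_mul_sin (halt : ∀ j : ℤ, c j = (-1) ^ j * |c j|) (θ : ℝ) :
    Pfun α c θ = |c ⌊θ * α / π⌋| * sin (α * θ) := by
  have hsign : ((-1 : ℝ) ^ ⌊θ * α / π⌋) ^ 2 = 1 := by
    rw [← zpow_natCast, ← zpow_mul, mul_comm, zpow_mul]; norm_num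
  unfold Pfun
  rw [abs_sin_eq_neg_one_zpow_floor_mul_sin, mul_comm (α : ℝ) θ]
  nth_rw 1 [halt]
  linear_combination |c ⌊θ * α / π⌋| * sin (θ * α) * hsign

lemma abs_sub_one_eq_of_differentiableAt_Pfun (hα : 0 < α)
    (halt : ∀ j : ℤ, c j = (-1) ^ j * |c j|) (j : ℤ)
    (hdiff : DifferentiableAt ℝ (Pfun α c) (j * (π / α))) :
    |c (j - 1)| = |c j| := by
  have hαR : (0 : ℝ) < α := Nat.cast_pos.2 hα
  have hs : 0 < π / α := div_pos pi_pos hαR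
  set θ₀ : ℝ := j * (π / α)
  have hαθ₀ : α * θ₀ = j * π := by simp only [θ₀]; field_simp
  have hsin : sin (α * θ₀) = 0 := by rw [hαθ₀, sin_int_mul_pi]
  have hderiv (a : ℝ) :
      HasDerivAt (fun θ => a * sin (α * θ)) (a * (cos (α * θ₀) * α)) θ₀ := by
    simpa using (((hasDerivAt_id θ₀).const_mul (α : ℝ)).sin.const_mul a)
  have hR : Pfun α c =ᶠ[𝓝[>] θ₀] fun θ => |c j| * sin (α * θ) := by
    filter_upwards [Ioo_mem_nhdsGT (show θ₀ < (j + 1) * (π / α) by nlinarith)] with θ hθ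
    rw [Pfun_eq_abs_mul_sin halt, floor_mul_div_eq_of_mem_Ico hαR pi_pos ⟨hθ.1.le, hθ.2⟩]
  have hL : Pfun α c =ᶠ[𝓝[<] θ₀] fun θ => |c (j - 1)| * sin (α * θ) := by
    filter_upwards [Ioo_mem_nhdsLT (show (j - 1) * (π / α) < θ₀ by nlinarith)] with θ hθ
    rw [Pfun_eq_abs_mul_sin halt, floor_mul_div_eq_of_mem_Ico hαR pi_pos (j := j - 1)]
    push_cast
    exact ⟨hθ.1.le, by linarith [hθ.2]⟩
  have hslope : cos (α * θ₀) * α ≠ 0 := by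
    rw [hαθ₀, cos_int_mul_pi]
    exact mul_ne_zero (zpow_ne_zero _ (by norm_num)) hαR.ne'
  have hzero : Pfun α c θ₀ = 0 := by rw [Pfun_eq_abs_mul_sin halt, hsin, mul_zero]
  refine (mul_right_cancel₀ hslope ((hderiv _).eq_of_eventuallyEq_nhdsGT_nhdsLT (hderiv _)
    hdiff hR hL ?_ ?_)).symm <;> simp [hzero, hsin]

lemma abs_eq_abs_zero_of_differentiable_Pfun (hα : 0 < α)
    (halt : ∀ j : ℤ, c j = (-1) ^ j * |c j|) (hdiff : ∀ θ, DifferentiableAt ℝ (Pfun α c) θ)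
    (j : ℤ) : |c j| = |c 0| := by
  have hperiodic : Function.Periodic (fun j => |c j|) 1 := fun j => by
    simpa using (abs_sub_one_eq_of_differentiableAt_Pfun hα halt (j + 1) (hdiff _)).symm
  simpa using hperiodic.int_mul_eq j

end Pfun

lemma Complex.im_ofReal_mul_exp_mul_I_pow (n : ℕ) (r θ : ℝ) :
    (((r : ℂ) * Complex.exp (θ * Complex.I)) ^ n).im = r ^ n * Real.sin (n * θ) := by
  rw [mul_pow, ← Complex.exp_nat_mul, ← Complex.ofReal_pow,
    show (n : ℂ) * (θ * Complex.I) = ((n * θ : ℝ) : ℂ) * Complex.I by push_cast; ring,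
    Complex.im_ofReal_mul, Complex.exp_ofReal_mul_I_im]

theorem stmt3_general (α : ℕ) (hα : 0 < α) (c : ℤ → ℝ)
    (halt : ∀ j : ℤ, c j = (-1) ^ j * |c j|)
    (hC1 : ∀ θ : ℝ, DifferentiableAt ℝ (Pfun α c) θ) :
    (∀ j j' : ℤ, |c j| = |c j'|) ∧
      (∀ θ : ℝ, Pfun α c θ = c 0 * Real.sin (α * θ)) ∧
      ∀ r θ : ℝ, 0 ≤ r →
        r ^ α * Pfun α c θ =
          c 0 * (((r : ℂ) * Complex.exp ((θ : ℂ) * Complex.I)) ^ α).im := by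
  have habs := abs_eq_abs_zero_of_differentiable_Pfun hα halt hC1
  have hc0 : |c 0| = c 0 := by simpa using (halt 0).symm
  have hP (θ : ℝ) : Pfun α c θ = c 0 * sin (α * θ) := by
    rw [Pfun_eq_abs_mul_sin halt, habs, hc0]
  refine ⟨fun j j' => (habs j).trans (habs j').symm, hP, fun r θ _ => ?_⟩
  rw [hP, Complex.im_ofReal_mul_exp_mul_I_pow]
  ring

/-- if the piecewise function `p(r,θ) = c_j r^α |sin(αθ)|`, with coefficients
alternating in sign, is C¹ across each ray `{θ = jπ/α}`, then all `|c_j|` coincide and `p`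
is (up to a constant) the harmonic polynomial `r^α sin(αθ) = Im(z^α)`. -/
theorem stmt3 (α : ℕ) (hα : 0 < α) (c : ℤ → ℝ)
    (hper : ∀ j : ℤ, c (j + 2 * α) = c j)
    (halt : ∀ j : ℤ, c j = (-1) ^ j * |c j|)
    (hC1 : ∀ θ : ℝ, DifferentiableAt ℝ (Pfun α c) θ) :
    (∀ j j' : ℤ, |c j| = |c j'|) ∧
      (∀ θ : ℝ, Pfun α c θ = c 0 * Real.sin (α * θ)) ∧
      ∀ r θ : ℝ, 0 ≤ r →
        r ^ α * Pfun α c θ =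
          c 0 * (((r : ℂ) * Complex.exp ((θ : ℂ) * Complex.I)) ^ α).im :=
  stmt3_general α hα c halt hC1
end

section
/- Let $I : (0, r_1] \to \mathbb{R}$ be a $C^1$ function satisfying $I(r) \leq \alpha + \gamma/4$ for all $r \in (0, r_1]$, the lower bound $I(r) - \alpha \geq -C_0 r^{\gamma}$, and the differential inequality $I'(r) \geq \frac{2}{r}(I(r) - \alpha)\big(\alpha + \gamma - I(r)\big) - C_0 r^{\gamma - 1} - r^{1+\gamma/2}\frac{D'(r)}{D(r)}$, where $D : (0,r_1] \to (0,\infty)$ is a $C^1$ nondecreasing function with $D(r_1) \leq \Lambda$ and $D(r) \geq \lambda > 0$, and $\alpha \geq 1$, $\gamma \in (0,1]$, $C_0 > 0$ are constants. Then there exists $C = C(\alpha, \gamma, C_0, \Lambda, \lambda, r_1)$ such that $|I(r) - \alpha| \leq C r^{\gamma/2}$ for all $r \in (0, r_1]$. -/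
open Real Set

lemma key_ineq (γ C0 u t T : ℝ) (hγ : 0 < γ) (hC0 : 0 < C0)
    (hu1 : u ≤ γ / 4) (hu2 : -(C0 * t) ≤ u) (ht : 0 < t) (htT : t ≤ T) :
    0 ≤ u * (3 * γ / 2 - 2 * u) + 2 * C0 * (γ + C0 * T) * t := by
  rcases le_or_gt 0 u with h | h
  · have hv : γ ≤ 3 * γ / 2 - 2 * u := by linarith
    nlinarith [mul_nonneg h (le_trans hγ.le hv), mul_pos (mul_pos hC0 (by nlinarith : (0:ℝ) < γ + C0 * T)) ht]
  · have hv2 : 3 * γ / 2 - 2 * u ≤ 2 * (γ + C0 * T) := by nlinarith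
    have h1 : u * (3 * γ / 2 - 2 * u) ≥ u * (2 * (γ + C0 * T)) := by
      nlinarith
    nlinarith [mul_le_mul_of_nonneg_right hu2 (by nlinarith : (0:ℝ) ≤ 2 * (γ + C0 * T))]

/-- the ODE/Grönwall argument for the frequency function: from the upper bound,
the lower bound `I - α ≥ -C₀r^γ`, and the differential inequality, one deduces the power-law
decay `|I(r) - α| ≤ C r^{γ/2}`. -/
theorem stmt13 (α γ C0 r1 Λ lam : ℝ)
    (hα : 1 ≤ α) (hγ : γ ∈ Set.Ioc (0 : ℝ) 1) (hC0 : 0 < C0) (hr1 : 0 < r1)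
    (hlam : 0 < lam)
    (I I' D D' : ℝ → ℝ)
    (hI : ∀ r ∈ Set.Ioc 0 r1, HasDerivAt I (I' r) r)
    (hD : ∀ r ∈ Set.Ioc 0 r1, HasDerivAt D (D' r) r)
    (hD0 : ∀ r ∈ Set.Ioc 0 r1, lam ≤ D r)
    (hDmono : ∀ r ∈ Set.Ioc 0 r1, 0 ≤ D' r)
    (hDΛ : D r1 ≤ Λ)
    (hIub : ∀ r ∈ Set.Ioc 0 r1, I r ≤ α + γ / 4)
    (hIlb : ∀ r ∈ Set.Ioc 0 r1, -(C0 * r ^ γ) ≤ I r - α)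
    (hODE : ∀ r ∈ Set.Ioc 0 r1,
      (2 / r) * (I r - α) * (α + γ - I r) - C0 * r ^ (γ - 1) -
          r ^ (1 + γ / 2) * (D' r / D r) ≤ I' r) :
    ∃ C : ℝ, 0 < C ∧ ∀ r ∈ Set.Ioc 0 r1, |I r - α| ≤ C * r ^ (γ / 2) := by
  obtain ⟨hγ0, hγ1⟩ := hγ
  -- constant C1 written out fully
  set g : ℝ → ℝ := fun x =>
    (I x - α) * x ^ (-(γ/2)) +
      (2 * (C0 * (2 * (γ + C0 * r1 ^ γ) + 1)) / γ) * x ^ (γ/2) + r1 * Real.log (D x)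
    with hgdef
  set G : ℝ → ℝ := fun x =>
    I' x * x ^ (-(γ/2)) + (I x - α) * (-(γ/2) * x ^ (-(γ/2) - 1)) +
      (2 * (C0 * (2 * (γ + C0 * r1 ^ γ) + 1)) / γ) * ((γ/2) * x ^ (γ/2 - 1)) +
      r1 * (D' x / D x)
    with hGdef
  have hg : ∀ x ∈ Set.Ioc (0:ℝ) r1, HasDerivAt g (G x) x := by
    intro x hx
    have hx0 : 0 < x := hx.1
    have hDx : 0 < D x := lt_of_lt_of_le hlam (hD0 x hx)
    have h1 : HasDerivAt (fun y => I y - α) (I' x) x := (hI x hx).sub_const α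
    have h2 : HasDerivAt (fun y : ℝ => y ^ (-(γ/2))) (-(γ/2) * x ^ (-(γ/2) - 1)) x :=
      Real.hasDerivAt_rpow_const (Or.inl hx0.ne')
    have h3 : HasDerivAt (fun y : ℝ => y ^ (γ/2)) ((γ/2) * x ^ (γ/2 - 1)) x :=
      Real.hasDerivAt_rpow_const (Or.inl hx0.ne')
    have h4 : HasDerivAt (fun y => Real.log (D y)) (D' x / D x) x :=
      (hD x hx).log hDx.ne'
    exact ((h1.mul h2).add (h3.const_mul _)).add (h4.const_mul r1)
  have hGnn : ∀ x ∈ Set.Ioc (0:ℝ) r1, 0 ≤ G x := by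
    intro x hx
    have hx0 : 0 < x := hx.1
    have hDx : 0 < D x := lt_of_lt_of_le hlam (hD0 x hx)
    have hE : 0 ≤ D' x / D x := div_nonneg (hDmono x hx) hDx.le
    have hq : 0 < x ^ (-(γ/2) - 1) := rpow_pos_of_pos hx0 _
    have hp : 0 < x ^ (-(γ/2)) := rpow_pos_of_pos hx0 _
    have htpos : 0 < x ^ γ := rpow_pos_of_pos hx0 _
    have hpq : x ^ (-(γ/2)) = x ^ (-(γ/2) - 1) * x := by
      rw [← rpow_add_one hx0.ne']; congr 1; ring
    have hs : x ^ (γ/2 - 1) = x ^ (-(γ/2) - 1) * x ^ γ := by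
      rw [← rpow_add hx0]; congr 1; ring
    have h1p : x ^ (1 + γ/2) * x ^ (-(γ/2)) = x := by
      rw [← rpow_add hx0]; norm_num
    have k1 : x ^ (γ - 1) * x ^ (-(γ/2)) = x ^ γ * x ^ (-(γ/2) - 1) := by
      rw [← rpow_add hx0, ← rpow_add hx0]; congr 1; ring
    have k3 : 2 / x * x ^ (-(γ/2)) = 2 * x ^ (-(γ/2) - 1) := by
      rw [hpq]; field_simp
    have hA := mul_le_mul_of_nonneg_right (hODE x hx) hp.le
    have e1 : (2 / x * (I x - α) * (α + γ - I x) - C0 * x ^ (γ - 1) -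
          x ^ (1 + γ/2) * (D' x / D x)) * x ^ (-(γ/2)) =
        2 * (I x - α) * (α + γ - I x) * x ^ (-(γ/2) - 1)
          - C0 * (x ^ γ * x ^ (-(γ/2) - 1)) - x * (D' x / D x) := by
      linear_combination ((I x - α) * (α + γ - I x)) * k3 - C0 * k1 - (D' x / D x) * h1p
    rw [e1] at hA
    have hkey := key_ineq γ C0 (I x - α) (x ^ γ) (r1 ^ γ) hγ0 hC0
      (by linarith [hIub x hx]) (hIlb x hx) htpos
      (rpow_le_rpow hx0.le hx.2 hγ0.le)
    have step : 0 ≤ x ^ (-(γ/2) - 1) *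
        ((I x - α) * (3 * γ / 2 - 2 * (I x - α)) + 2 * C0 * (γ + C0 * r1 ^ γ) * x ^ γ) :=
      mul_nonneg hq.le hkey
    have step2 : 0 ≤ (r1 - x) * (D' x / D x) :=
      mul_nonneg (by linarith [hx.2]) hE
    have ecoef : (2 * (C0 * (2 * (γ + C0 * r1 ^ γ) + 1)) / γ) * ((γ/2) * x ^ (γ/2 - 1)) =
        (C0 * (2 * (γ + C0 * r1 ^ γ) + 1)) * (x ^ γ * x ^ (-(γ/2) - 1)) := by
      rw [hs]; field_simp
    have hGx : G x = I' x * x ^ (-(γ/2)) + (I x - α) * (-(γ/2) * x ^ (-(γ/2) - 1)) +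
        (2 * (C0 * (2 * (γ + C0 * r1 ^ γ) + 1)) / γ) * ((γ/2) * x ^ (γ/2 - 1)) +
        r1 * (D' x / D x) := rfl
    rw [hGx, ecoef]
    nlinarith [hA, step, step2]
  -- define the constant
  have hgv : ∀ y, g y = (I y - α) * y ^ (-(γ/2)) +
      (2 * (C0 * (2 * (γ + C0 * r1 ^ γ) + 1)) / γ) * y ^ (γ/2) + r1 * Real.log (D y) :=
    fun y => rfl
  clear_value g G
  set K : ℝ := g r1 - r1 * Real.log lam with hK
  set C : ℝ := |K| + C0 * r1 ^ (γ/2) + 1 with hC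
  clear_value K C
  refine ⟨C, by rw [hC]; positivity, ?_⟩
  intro r hr
  have hr0 : 0 < r := hr.1
  have hrp : 0 < r ^ (γ/2) := rpow_pos_of_pos hr0 _
  have hr1p : r ^ (γ/2) ≤ r1 ^ (γ/2) := rpow_le_rpow hr0.le hr.2 (by positivity)
  -- monotonicity of g on [r, r1]
  have hsub : Set.Icc r r1 ⊆ Set.Ioc 0 r1 := fun x hx => ⟨lt_of_lt_of_le hr0 hx.1, hx.2⟩
  have mono : MonotoneOn g (Set.Icc r r1) := by
    apply monotoneOn_of_deriv_nonneg (convex_Icc r r1)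
    · exact fun x hx => ((hg x (hsub hx)).continuousAt).continuousWithinAt
    · intro x hx
      rw [interior_Icc] at hx
      exact ((hg x (hsub (Set.mem_Icc_of_Ioo hx))).differentiableAt).differentiableWithinAt
    · intro x hx
      rw [interior_Icc] at hx
      rw [(hg x (hsub (Set.mem_Icc_of_Ioo hx))).deriv]
      exact hGnn x (hsub (Set.mem_Icc_of_Ioo hx))
  have hgr : g r ≤ g r1 := mono ⟨le_refl r, hr.2⟩ ⟨hr.2, le_refl r1⟩ hr.2
  -- extract the upper bound
  have hlog : Real.log lam ≤ Real.log (D r) :=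
    Real.log_le_log hlam (hD0 r hr)
  have hcnn : 0 ≤ (2 * (C0 * (2 * (γ + C0 * r1 ^ γ) + 1)) / γ) * r ^ (γ/2) := by
    have : (0:ℝ) < r1 ^ γ := rpow_pos_of_pos hr1 _
    positivity
  have hlog2 : r1 * Real.log lam ≤ r1 * Real.log (D r) :=
    mul_le_mul_of_nonneg_left hlog hr1.le
  have hup : (I r - α) * r ^ (-(γ/2)) ≤ K := by
    rw [hK]
    have hgrv := hgv r
    linarith [hgr, hcnn, hlog2, hgrv.le, hgrv.ge]
  have hid : (I r - α) * r ^ (-(γ/2)) * r ^ (γ/2) = I r - α := by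
    rw [mul_assoc, ← rpow_add hr0]
    norm_num
  have hup2 : I r - α ≤ K * r ^ (γ/2) :=
    calc I r - α = (I r - α) * r ^ (-(γ/2)) * r ^ (γ/2) := hid.symm
      _ ≤ K * r ^ (γ/2) := mul_le_mul_of_nonneg_right hup hrp.le
  have hsq : r ^ γ = r ^ (γ/2) * r ^ (γ/2) := by
    rw [← rpow_add hr0]; congr 1; ring
  rw [abs_le]
  constructor
  · have hlow := hIlb r hr
    have ha : r ^ (γ/2) * r ^ (γ/2) ≤ r1 ^ (γ/2) * r ^ (γ/2) :=
      mul_le_mul_of_nonneg_right hr1p hrp.le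
    have h1 : C0 * r ^ γ ≤ C0 * r1 ^ (γ/2) * r ^ (γ/2) := by
      rw [hsq]
      have := mul_le_mul_of_nonneg_left ha hC0.le
      linarith
    have hKabs : C0 * r1 ^ (γ/2) ≤ C := by
      rw [hC]; linarith [abs_nonneg K]
    have h2 : C0 * r1 ^ (γ/2) * r ^ (γ/2) ≤ C * r ^ (γ/2) :=
      mul_le_mul_of_nonneg_right hKabs hrp.le
    linarith
  · have hKC : K ≤ C := by
      have h1 := le_abs_self K
      have h2 : (0:ℝ) < C0 * r1 ^ (γ/2) := by positivity
      rw [hC]; linarith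
    have h3 := mul_le_mul_of_nonneg_right hKC hrp.le
    linarith
end
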